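/- arXiv:1806.07274 — 2 statements merged into one kernel-verified Lean document; each statement's English description precedes it below -/
import Mathlib

section
/- (Lemma 1(iii)) Fix a D×D real unit lower triangular matrix L and indices i > j. For t ∈ ℝ let L(t) be the matrix obtained from L by replacing the (i,j) entry with t, and set Σ(t) = L(t) L(t)ᵀ, Λ(t) = diag(Σ(t)), R(t) = Λ(t)^{-1/2} Σ(t) Λ(t)^{-1/2}. Then the function t ↦ log det R(t) is differentiable at t = L_{ij} with derivative ∂ log|R|/∂L_{ij} = -2 L_{ij} / (Σ_{k=1}^{i} L_{ik}²). -/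
open Matrix Finset

/-!
Since `L(t)` is unit lower triangular, `det Σ(t) = det L(t) ^ 2 = 1`, so
`det R(t) = ∏ₖ Σ(t)ₖₖ⁻¹` and `log det R(t) = -∑ₖ log ∑ₗ L(t)ₖₗ²`. Only the `i`-th row depends
on `t`, and its squared norm is `t² + c` with `c` constant, which gives the derivative
`-2 L i j / ∑ₗ L i l ²`; by triangularity that row norm is `∑_{l ≤ i} L i l ²`.
-/

namespace Matrix

variable {m n α : Type*}

section RowNorm

variable [Fintype n]

theorem mul_transpose_self_apply_self [CommSemiring α] (A : Matrix m n α) (k : m) :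
    (A * Aᵀ) k k = ∑ l, A k l ^ 2 := by
  simp [mul_apply, sq]

theorem sum_sq_row_pos_of_ne_zero (A : Matrix m n ℝ) {k : m} {l : n} (h : A k l ≠ 0) :
    0 < ∑ l, A k l ^ 2 :=
  lt_of_lt_of_le (by positivity)
    (single_le_sum (f := fun l => A k l ^ 2) (fun _ _ => sq_nonneg _) (mem_univ l))

end RowNorm

section Correlation

variable [Fintype n] [DecidableEq n]

theorem det_mul_transpose_eq_one [CommRing α] [LinearOrder n] (L : Matrix n n α)
    (hL : L.IsLowerTriangular) (hdiag : ∀ k, L k k = 1) : (L * Lᵀ).det = 1 := by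
  rw [det_mul, det_transpose, det_of_isLowerTriangular L hL]
  simp [hdiag]

noncomputable def correlation (S : Matrix n n ℝ) : Matrix n n ℝ :=
  diagonal (fun k => (√(S k k))⁻¹) * S * diagonal (fun k => (√(S k k))⁻¹)

theorem det_correlation (S : Matrix n n ℝ) (hS : ∀ k, 0 ≤ S k k) :
    S.correlation.det = S.det * ∏ k, (S k k)⁻¹ := by
  rw [correlation, det_mul, det_mul, det_diagonal, mul_right_comm, ← prod_mul_distrib, mul_comm]
  refine congrArg (S.det * ·) (prod_congr rfl fun k _ => ?_)
  rw [← mul_inv, Real.mul_self_sqrt (hS k)]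

theorem log_det_correlation_mul_transpose [LinearOrder n] (L : Matrix n n ℝ)
    (hL : L.IsLowerTriangular) (hdiag : ∀ k, L k k = 1) :
    Real.log (L * Lᵀ).correlation.det = -∑ k, Real.log (∑ l, L k l ^ 2) := by
  have hpos : ∀ k, 0 < (L * Lᵀ) k k := fun k => by
    rw [mul_transpose_self_apply_self]
    exact sum_sq_row_pos_of_ne_zero L (l := k) (by simp [hdiag])
  rw [det_correlation _ fun k => (hpos k).le, det_mul_transpose_eq_one L hL hdiag, one_mul,
    Real.log_prod fun k _ => inv_ne_zero (hpos k).ne', ← sum_neg_distrib]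
  simp only [Real.log_inv, mul_transpose_self_apply_self]

end Correlation

section UpdateEntry

variable [DecidableEq m] [DecidableEq n]

def updateEntry (L : Matrix m n α) (i : m) (j : n) (t : α) : Matrix m n α :=
  of fun k l => if k = i ∧ l = j then t else L k l

theorem updateEntry_apply (L : Matrix m n α) (i : m) (j : n) (t : α) (k : m) (l : n) :
    L.updateEntry i j t k l = if k = i ∧ l = j then t else L k l :=
  rfl

theorem updateEntry_apply_of_ne_left (L : Matrix m n α) {i k : m} (j : n) (t : α) (hk : k ≠ i)
    (l : n) : L.updateEntry i j t k l = L k l :=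
  if_neg fun h => hk h.1

theorem updateEntry_apply_of_ne_right (L : Matrix m n α) (i : m) {j l : n} (t : α) (k : m)
    (hl : l ≠ j) : L.updateEntry i j t k l = L k l :=
  if_neg fun h => hl h.2

theorem IsLowerTriangular.updateEntry [Zero α] [LinearOrder n] {L : Matrix n n α}
    (hL : L.IsLowerTriangular) {i j : n} (hji : j ≤ i) (t : α) :
    (L.updateEntry i j t).IsLowerTriangular := fun _ _ hkl =>
  (if_neg fun ⟨hki, hlj⟩ =>
    (hji.trans_lt (hki ▸ hlj ▸ OrderDual.toDual_lt_toDual.1 hkl)).false).trans (hL hkl)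

theorem updateEntry_apply_self_of_ne (L : Matrix n n α) {i j : n} (hij : i ≠ j) (t : α)
    (k : n) : L.updateEntry i j t k k = L k k :=
  if_neg fun ⟨hki, hkj⟩ => hij (hki ▸ hkj)

variable [Fintype n]

theorem sum_sq_updateEntry_row (L : Matrix m n ℝ) (i : m) (j : n) (t : ℝ) :
    ∑ l, L.updateEntry i j t i l ^ 2 = t ^ 2 + ∑ l ∈ univ.erase j, L i l ^ 2 := by
  rw [← add_sum_erase _ _ (mem_univ j), updateEntry_apply, if_pos ⟨rfl, rfl⟩]
  exact congrArg _ (sum_congr rfl fun l hl => by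
    rw [updateEntry_apply_of_ne_right L i t i (ne_of_mem_erase hl)])

theorem hasDerivAt_neg_sum_log_sum_sq_updateEntry [Fintype m] (L : Matrix m n ℝ) (i : m) (j : n)
    (hi : ∑ l, L i l ^ 2 ≠ 0) :
    HasDerivAt (fun t => -∑ k, Real.log (∑ l, L.updateEntry i j t k l ^ 2))
      (-2 * L i j / ∑ l, L i l ^ 2) (L i j) := by
  set c := ∑ l ∈ univ.erase j, L i l ^ 2
  set C := ∑ k ∈ univ.erase i, Real.log (∑ l, L k l ^ 2)
  have hrow : ∑ l, L i l ^ 2 = L i j ^ 2 + c := (add_sum_erase _ _ (mem_univ j)).symm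
  have hsplit : ∀ t, ∑ k, Real.log (∑ l, L.updateEntry i j t k l ^ 2) =
      Real.log (t ^ 2 + c) + C := fun t => by
    rw [← add_sum_erase _ _ (mem_univ i), sum_sq_updateEntry_row]
    exact congrArg _ (sum_congr rfl fun k hk => by
      simp only [updateEntry_apply_of_ne_left L j t (ne_of_mem_erase hk)])
  have hd := ((((hasDerivAt_pow 2 (L i j)).add_const c).log (hrow ▸ hi)).add_const C).neg
  simp only [hsplit]
  refine hd.congr_deriv ?_
  rw [hrow]
  norm_num
  ring

end UpdateEntry

end Matrix

theorem hasDerivAt_log_det_correlation_general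
    (D : ℕ) (L : Matrix (Fin D) (Fin D) ℝ)
    (hlow : ∀ i j : Fin D, i < j → L i j = 0)
    (hdiag : ∀ i : Fin D, L i i = 1)
    (i j : Fin D) (hij : j < i)
    (Lt : ℝ → Matrix (Fin D) (Fin D) ℝ)
    (hLt : ∀ t k l, Lt t k l = if k = i ∧ l = j then t else L k l)
    (St : ℝ → Matrix (Fin D) (Fin D) ℝ)
    (hSt : ∀ t, St t = Lt t * (Lt t)ᵀ)
    (Rt : ℝ → Matrix (Fin D) (Fin D) ℝ)
    (hRt : ∀ t, Rt t = Matrix.diagonal (fun k => (Real.sqrt (St t k k))⁻¹) *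
      St t * Matrix.diagonal (fun k => (Real.sqrt (St t k k))⁻¹)) :
    HasDerivAt (fun t => Real.log ((Rt t).det))
      (-2 * L i j / ∑ k ∈ Finset.Iic i, (L i k) ^ 2) (L i j) := by
  have hL : L.IsLowerTriangular := fun k l hkl => hlow k l (OrderDual.toDual_lt_toDual.1 hkl)
  have hRt' (t : ℝ) :
      Rt t = (L.updateEntry i j t * (L.updateEntry i j t)ᵀ).correlation := by
    rw [hRt, hSt, show Lt t = L.updateEntry i j t from ext (hLt t)]
    rfl
  have hlog : (fun t => Real.log (Rt t).det) =
      fun t => -∑ k, Real.log (∑ l, L.updateEntry i j t k l ^ 2) := funext fun t => by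
    rw [hRt', log_det_correlation_mul_transpose _ (hL.updateEntry hij.le t)
      (fun k => (updateEntry_apply_self_of_ne L hij.ne' t k).trans (hdiag k))]
  have hrow : ∑ k ∈ Iic i, L i k ^ 2 = ∑ k, L i k ^ 2 :=
    sum_subset (subset_univ _) fun k _ hk => by
      rw [hlow i k (not_le.1 (by simpa using hk)), zero_pow two_ne_zero]
  rw [hlog, hrow]
  exact hasDerivAt_neg_sum_log_sum_sq_updateEntry L i j
    (sum_sq_row_pos_of_ne_zero L (l := i) (by simp [hdiag])).ne'

/-- Lemma 1(iii): fix a unit lower triangular `L` and indices `j < i`.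
Perturbing the `(i,j)` entry of `L` to `t`, forming `Σ(t) = L(t) L(t)ᵀ`,
`Λ(t) = diag(Σ(t))` and `R(t) = Λ(t)^{-1/2} Σ(t) Λ(t)^{-1/2}`, the map
`t ↦ log det R(t)` is differentiable at `t = L i j` with derivative
`-2 L i j / ∑_{k ≤ i} L i k ^ 2`. -/
theorem hasDerivAt_log_det_correlation
    (D : ℕ) (hD : 0 < D) (L : Matrix (Fin D) (Fin D) ℝ)
    (hlow : ∀ i j : Fin D, i < j → L i j = 0)
    (hdiag : ∀ i : Fin D, L i i = 1)
    (i j : Fin D) (hij : j < i)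
    (Lt : ℝ → Matrix (Fin D) (Fin D) ℝ)
    (hLt : ∀ t k l, Lt t k l = if k = i ∧ l = j then t else L k l)
    (St : ℝ → Matrix (Fin D) (Fin D) ℝ)
    (hSt : ∀ t, St t = Lt t * (Lt t)ᵀ)
    (Rt : ℝ → Matrix (Fin D) (Fin D) ℝ)
    (hRt : ∀ t, Rt t = Matrix.diagonal (fun k => (Real.sqrt (St t k k))⁻¹) *
      St t * Matrix.diagonal (fun k => (Real.sqrt (St t k k))⁻¹)) :
    HasDerivAt (fun t => Real.log ((Rt t).det))
      (-2 * L i j / ∑ k ∈ Finset.Iic i, (L i k) ^ 2) (L i j) :=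
  hasDerivAt_log_det_correlation_general D L hlow hdiag i j hij Lt hLt St hSt Rt hRt
end

section
/- The Cholesky-factor parameterisation of correlation matrices is injective: if L₁ and L₂ are D×D real unit lower triangular matrices such that Λ₁^{-1/2} L₁L₁ᵀ Λ₁^{-1/2} = Λ₂^{-1/2} L₂L₂ᵀ Λ₂^{-1/2}, where Λ_m = diag(L_m L_mᵀ) for m = 1, 2, then L₁ = L₂. -/
/-!
Write `Rₘ = Λₘ^{-1/2} Lₘ`. Then the correlation matrix is `Rₘ Rₘᵀ`, and `Rₘ` is lower triangular
with positive diagonal, so `R₁ = R₂` by uniqueness of the Cholesky factor: `R₂⁻¹ R₁ = R₂ᵀ R₁⁻ᵀ`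
is both lower and upper triangular, hence a positive diagonal matrix whose square is `1`.
Comparing diagonals of `R₁ = R₂` gives `Λ₁ = Λ₂`, and cancelling it gives `L₁ = L₂`.
-/

open Matrix

namespace Matrix

variable {m n K : Type*}

theorem sq_le_mul_transpose_apply_self [Fintype n] [CommRing K] [LinearOrder K]
    [IsStrictOrderedRing K] (L : Matrix m n K) (i : m) (j : n) : L i j ^ 2 ≤ (L * Lᵀ) i i := by
  rw [mul_apply, sq]
  exact Finset.single_le_sum (f := fun k => L i k * L i k) (fun k _ => mul_self_nonneg _)
    (Finset.mem_univ j)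

theorem diagonal_mul_mul_transpose_mul_diagonal [Fintype n] [DecidableEq n] [CommSemiring K]
    (d : n → K) (L : Matrix n n K) :
    diagonal d * (L * Lᵀ) * diagonal d = (diagonal d * L) * (diagonal d * L)ᵀ := by
  rw [transpose_mul, diagonal_transpose]
  simp only [Matrix.mul_assoc]

variable [LinearOrder n]

theorem eq_diagonal_of_isLowerTriangular_of_isUpperTriangular [Zero K] {M : Matrix n n K}
    (hl : M.IsLowerTriangular) (hu : M.IsUpperTriangular) : M = diagonal M.diag := by
  ext i j
  rcases lt_trichotomy i j with hij | rfl | hij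
  · simp [hl hij, hij.ne]
  · simp
  · simp [hu hij, hij.ne']

variable [Fintype n]

theorem IsLowerTriangular.isUnit_det [CommRing K] {M : Matrix n n K} (h : M.IsLowerTriangular)
    (hdiag : ∀ i, IsUnit (M i i)) : IsUnit M.det := by
  rw [det_of_isLowerTriangular M h]
  exact IsUnit.prod_univ_iff.mpr hdiag

theorem IsLowerTriangular.eq_of_mul_transpose_eq [Field K] [LinearOrder K]
    [IsStrictOrderedRing K] {R S : Matrix n n K}
    (hR : R.IsLowerTriangular) (hS : S.IsLowerTriangular)
    (hRpos : ∀ i, 0 < R i i) (hSpos : ∀ i, 0 < S i i) (h : R * Rᵀ = S * Sᵀ) : R = S := by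
  have := invertibleOfIsUnitDet R (hR.isUnit_det fun i => (hRpos i).ne'.isUnit)
  have := invertibleOfIsUnitDet S (hS.isUnit_det fun i => (hSpos i).ne'.isUnit)
  have := invertibleTranspose R
  set d := (S⁻¹ * R).diag
  have hlower : (S⁻¹ * R).IsLowerTriangular :=
    (blockTriangular_inv_of_blockTriangular hS).mul hR
  have hupper : (S⁻¹ * R).IsUpperTriangular := by
    have : S⁻¹ * R = Sᵀ * Rᵀ⁻¹ := calc
      S⁻¹ * R = S⁻¹ * (R * Rᵀ) * Rᵀ⁻¹ := by
        rw [Matrix.mul_assoc, Matrix.mul_assoc, mul_inv_of_invertible, Matrix.mul_one]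
      _ = Sᵀ * Rᵀ⁻¹ := by rw [h, inv_mul_cancel_left_of_invertible]
    rw [this]
    exact hS.transpose.mul (blockTriangular_inv_of_blockTriangular hR.transpose)
  have hRS : R = S * diagonal d := by
    rw [← eq_diagonal_of_isLowerTriangular_of_isUpperTriangular hlower hupper,
      mul_inv_cancel_left_of_invertible]
  have hd_pos : ∀ i, 0 < d i := fun i => by
    have := hRpos i
    rw [hRS, mul_diagonal] at this
    exact pos_of_mul_pos_right this (hSpos i).le
  have hd_sq : diagonal d * diagonal d = 1 := by
    have : S * (diagonal d * diagonal d) * Sᵀ = S * 1 * Sᵀ := by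
      rw [Matrix.mul_one, ← h, hRS, transpose_mul, diagonal_transpose]
      simp only [Matrix.mul_assoc]
    have hS : IsUnit S := isUnit_of_invertible S
    exact hS.mul_left_cancel (((isUnit_transpose S).mpr hS).mul_right_cancel this)
  have hd_one : d = 1 := funext fun i => by
    have : d i * d i = 1 := by simpa using congrFun₂ hd_sq i i
    exact (mul_self_eq_one_iff.mp this).resolve_right (by linarith [hd_pos i])
  rw [hRS, hd_one, Pi.one_def, diagonal_one, Matrix.mul_one]

end Matrix

theorem cholesky_correlation_injective_general
    (D : ℕ)
    (L₁ L₂ : Matrix (Fin D) (Fin D) ℝ)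
    (hlow₁ : ∀ i j : Fin D, i < j → L₁ i j = 0)
    (hdiag₁ : ∀ i : Fin D, L₁ i i = 1)
    (hlow₂ : ∀ i j : Fin D, i < j → L₂ i j = 0)
    (hdiag₂ : ∀ i : Fin D, L₂ i i = 1)
    (heq : Matrix.diagonal (fun i => (Real.sqrt ((L₁ * L₁ᵀ) i i))⁻¹) * (L₁ * L₁ᵀ) *
        Matrix.diagonal (fun i => (Real.sqrt ((L₁ * L₁ᵀ) i i))⁻¹) =
      Matrix.diagonal (fun i => (Real.sqrt ((L₂ * L₂ᵀ) i i))⁻¹) * (L₂ * L₂ᵀ) *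
        Matrix.diagonal (fun i => (Real.sqrt ((L₂ * L₂ᵀ) i i))⁻¹)) :
    L₁ = L₂ := by
  have hscale_pos : ∀ L : Matrix (Fin D) (Fin D) ℝ, (∀ i, L i i = 1) →
      ∀ i, 0 < (Real.sqrt ((L * Lᵀ) i i))⁻¹ := fun L hL i => by
    have := sq_le_mul_transpose_apply_self L i i
    rw [hL, one_pow] at this
    positivity
  set s₁ := fun i => (Real.sqrt ((L₁ * L₁ᵀ) i i))⁻¹
  set s₂ := fun i => (Real.sqrt ((L₂ * L₂ᵀ) i i))⁻¹
  have hR : diagonal s₁ * L₁ = diagonal s₂ * L₂ := by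
    refine IsLowerTriangular.eq_of_mul_transpose_eq ((blockTriangular_diagonal s₁).mul hlow₁)
      ((blockTriangular_diagonal s₂).mul hlow₂) (fun i => ?_) (fun i => ?_) ?_
    · rw [diagonal_mul, hdiag₁, mul_one]
      exact hscale_pos L₁ hdiag₁ i
    · rw [diagonal_mul, hdiag₂, mul_one]
      exact hscale_pos L₂ hdiag₂ i
    · rwa [← diagonal_mul_mul_transpose_mul_diagonal, ← diagonal_mul_mul_transpose_mul_diagonal]
  have hs : s₁ = s₂ := funext fun i => by
    simpa only [diagonal_mul, hdiag₁, hdiag₂, mul_one] using congrFun₂ hR i i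
  rw [hs] at hR
  exact (isUnit_diagonal.mpr (Pi.isUnit_iff.mpr fun i =>
    (hscale_pos L₂ hdiag₂ i).ne'.isUnit)).mul_left_cancel hR

/-- Injectivity of the Cholesky-factor parameterisation: if `L₁`, `L₂` are
unit lower triangular and the correlation matrices
`Λ_m^{-1/2} (L_m L_mᵀ) Λ_m^{-1/2}` (with `Λ_m = diag (L_m L_mᵀ)`) coincide,
then `L₁ = L₂`. -/
theorem cholesky_correlation_injective
    (D : ℕ) (hD : 0 < D)
    (L₁ L₂ : Matrix (Fin D) (Fin D) ℝ)
    (hlow₁ : ∀ i j : Fin D, i < j → L₁ i j = 0)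
    (hdiag₁ : ∀ i : Fin D, L₁ i i = 1)
    (hlow₂ : ∀ i j : Fin D, i < j → L₂ i j = 0)
    (hdiag₂ : ∀ i : Fin D, L₂ i i = 1)
    (heq : Matrix.diagonal (fun i => (Real.sqrt ((L₁ * L₁ᵀ) i i))⁻¹) * (L₁ * L₁ᵀ) *
        Matrix.diagonal (fun i => (Real.sqrt ((L₁ * L₁ᵀ) i i))⁻¹) =
      Matrix.diagonal (fun i => (Real.sqrt ((L₂ * L₂ᵀ) i i))⁻¹) * (L₂ * L₂ᵀ) *
        Matrix.diagonal (fun i => (Real.sqrt ((L₂ * L₂ᵀ) i i))⁻¹)) :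
    L₁ = L₂ :=
  cholesky_correlation_injective_general D L₁ L₂ hlow₁ hdiag₁ hlow₂ hdiag₂ heq
end
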